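/- For all trace-free A₁, A₂, A₃, B₁, B₂, B₃ ∈ SL(2,ℂ): tr(A₁A₂A₃)·tr(B₁B₂B₃) = (1/2)·det M, where M is the 3×3 complex matrix with entries M_{p,q} = −tr(A_p B_q) for 1 ≤ p, q ≤ 3. (This is the hexagon relation (H).) -/

import Mathlib

/-!
A trace-free `2 × 2` matrix is `!![a, b; c, -a]`, so it has coordinates `(a, b, c)`. In these
coordinates `tr (X * Y)` is the bilinear form with Gram matrix `G = !![2, 0, 0; 0, 0, 1; 0, 1, 0]`,
of determinant `-2`, and `tr (X * Y * Z)` is the determinant of the coordinate matrix of `X, Y, Z`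
(it is alternating since `X * Y + Y * X = tr (X * Y) • 1` for trace-free `X, Y`, and it is `1` on
the coordinate basis). Hence `(tr (A p * B q))` factors as `C_A * G * C_Bᵀ` with coordinate
matrices `C_A`, `C_B`, and its determinant is `-2 * tr (A 0 * A 1 * A 2) * tr (B 0 * B 1 * B 2)`.
-/

open Matrix

abbrev SL2C := Matrix.SpecialLinearGroup (Fin 2) ℂ

noncomputable def trSL2 (A : SL2C) : ℂ := Matrix.trace (A : Matrix (Fin 2) (Fin 2) ℂ)

namespace Matrix

variable {R : Type*} [CommRing R]

def slTwoCoords (X : Matrix (Fin 2) (Fin 2) R) : Fin 3 → R := ![X 0 0, X 0 1, X 1 0]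

def slTwoCoordMatrix {ι : Type*} (A : ι → Matrix (Fin 2) (Fin 2) R) : Matrix ι (Fin 3) R :=
  of fun p => slTwoCoords (A p)

def slTwoTraceForm (R : Type*) [CommRing R] : Matrix (Fin 3) (Fin 3) R :=
  !![2, 0, 0; 0, 0, 1; 0, 1, 0]

theorem det_slTwoTraceForm : det (slTwoTraceForm R) = -2 := by
  simp [slTwoTraceForm, det_fin_three]

theorem trace_fin_two_eq_zero_iff {X : Matrix (Fin 2) (Fin 2) R} :
    X.trace = 0 ↔ X 1 1 = -X 0 0 := by
  rw [trace_fin_two, add_comm, add_eq_zero_iff_eq_neg]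

theorem trace_mul_eq_slTwoCoords {X Y : Matrix (Fin 2) (Fin 2) R}
    (hX : X.trace = 0) (hY : Y.trace = 0) :
    (X * Y).trace = slTwoCoords X ⬝ᵥ (slTwoTraceForm R *ᵥ slTwoCoords Y) := by
  rw [trace_fin_two_eq_zero_iff] at hX hY
  simp only [slTwoCoords, slTwoTraceForm, trace_fin_two, mul_apply, Fin.sum_univ_two, mulVec,
    dotProduct, Fin.sum_univ_three, of_apply, cons_val_zero, cons_val_one, cons_val, hX, hY]
  ring

theorem of_trace_mul_eq {ι κ : Type*} {A : ι → Matrix (Fin 2) (Fin 2) R}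
    {B : κ → Matrix (Fin 2) (Fin 2) R} (hA : ∀ p, (A p).trace = 0) (hB : ∀ q, (B q).trace = 0) :
    of (fun p q => (A p * B q).trace) =
      slTwoCoordMatrix A * slTwoTraceForm R * (slTwoCoordMatrix B)ᵀ := by
  ext p q
  rw [of_apply, trace_mul_eq_slTwoCoords (hA p) (hB q)]
  simp only [slTwoCoordMatrix, mulVec, dotProduct, mul_apply, of_apply, transpose_apply,
    Fin.sum_univ_three]
  ring

theorem trace_mul_mul_eq_det_slTwoCoordMatrix {A : Fin 3 → Matrix (Fin 2) (Fin 2) R}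
    (hA : ∀ p, (A p).trace = 0) :
    (A 0 * A 1 * A 2).trace = det (slTwoCoordMatrix A) := by
  have h := fun p => trace_fin_two_eq_zero_iff.mp (hA p)
  simp only [det_fin_three, slTwoCoordMatrix, of_apply, slTwoCoords, trace_fin_two, mul_apply,
    Fin.sum_univ_two, h, cons_val_zero, cons_val_one, cons_val]
  ring

theorem det_of_neg_trace_mul {A B : Fin 3 → Matrix (Fin 2) (Fin 2) R}
    (hA : ∀ p, (A p).trace = 0) (hB : ∀ q, (B q).trace = 0) :
    det (of fun p q => -(A p * B q).trace) =
      2 * (A 0 * A 1 * A 2).trace * (B 0 * B 1 * B 2).trace := by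
  have hneg : (of fun p q => -(A p * B q).trace) = -of fun p q => (A p * B q).trace := rfl
  rw [hneg, det_neg, of_trace_mul_eq hA hB, det_mul, det_mul, det_transpose, det_slTwoTraceForm,
    trace_mul_mul_eq_det_slTwoCoordMatrix hA, trace_mul_mul_eq_det_slTwoCoordMatrix hB]
  simp only [Fintype.card_fin]
  ring

end Matrix

theorem trSL2_mul (A B : SL2C) : trSL2 (A * B) = ((A : Matrix (Fin 2) (Fin 2) ℂ) * B).trace :=
  congrArg trace (Matrix.SpecialLinearGroup.coe_mul A B)

theorem stmt7 (A B : Fin 3 → SL2C)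
    (hA : ∀ p, trSL2 (A p) = 0) (hB : ∀ q, trSL2 (B q) = 0) :
    trSL2 (A 0 * A 1 * A 2) * trSL2 (B 0 * B 1 * B 2) =
      (1 / 2) * Matrix.det (Matrix.of fun p q : Fin 3 => -trSL2 (A p * B q)) := by
  simp only [trSL2_mul, Matrix.SpecialLinearGroup.coe_mul]
  rw [det_of_neg_trace_mul (A := fun p => (A p : Matrix (Fin 2) (Fin 2) ℂ)) hA hB]
  ring
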